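/- If noisy |CCZ⟩ states are produced from four |T⟩ states each having independent Z-error probability p (via Jones's circuit, in which each of the four T errors propagates to a distinct single- or multi-qubit Z error on the output), then the 10-to-1 protocol output error is p_out = 4p² + 21p³ + O(p⁴). -/

import Mathlib

/-!
The 10-to-1 protocol with the `[[10,1,2]]` code, where the noisy `|CCZ⟩` input
is produced by Jones's circuit from four `|T⟩` states with independent Z-error
probability `p` each.  The four possible T errors propagate to the four distinct
Z errors `Z₁`, `Z₂`, `Z₃`, `Z₁Z₂Z₃` on the three output qubits.
-/

abbrev V3 := {v : Fin 3 → ZMod 2 // v ≠ 0}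

noncomputable def pT (p : ℝ) (e : V3 → Bool) : ℝ :=
  ∏ v : V3, if e v then p else 1 - p

/-- Probability of the error pattern `f` on the four `|T⟩` states used in
Jones's circuit. -/
noncomputable def pJones (p : ℝ) (f : Fin 4 → Bool) : ℝ :=
  ∏ j : Fin 4, if f j then p else 1 - p

/-- The distinct Z errors on the output `|CCZ⟩` state to which the four T errors
of Jones's circuit propagate: `Z₁`, `Z₂`, `Z₃` and `Z₁Z₂Z₃`. -/
def jonesErr : Fin 4 → Fin 3 → ZMod 2 :=
  ![![1, 0, 0], ![0, 1, 0], ![0, 0, 1], ![1, 1, 1]]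

/-- The Z error on the `|CCZ⟩` state induced by the T-error pattern `f`. -/
def bOf (f : Fin 4 → Bool) : Fin 3 → ZMod 2 :=
  ∑ j : Fin 4, if f j then jonesErr j else 0

def syndromeTrivial (e : V3 → Bool) (b : Fin 3 → ZMod 2) : Prop :=
  ∀ i : Fin 3, (∑ v : V3, if v.1 i = 1 ∧ e v then (1 : ZMod 2) else 0) = b i

instance (e : V3 → Bool) (b : Fin 3 → ZMod 2) : Decidable (syndromeTrivial e b) := by
  unfold syndromeTrivial; infer_instance

def logicalZErr (e : V3 → Bool) : Prop :=
  (∑ v : V3, if e v then (1 : ZMod 2) else 0) = 1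

instance (e : V3 → Bool) : Decidable (logicalZErr e) := by
  unfold logicalZErr; infer_instance

noncomputable def pSuccJ (p : ℝ) : ℝ :=
  ∑ e : V3 → Bool, ∑ f : Fin 4 → Bool,
    if syndromeTrivial e (bOf f) then pT p e * pJones p f else 0

noncomputable def pFailJ (p : ℝ) : ℝ :=
  ∑ e : V3 → Bool, ∑ f : Fin 4 → Bool,
    if syndromeTrivial e (bOf f) ∧ logicalZErr e then pT p e * pJones p f else 0

noncomputable def pOutJ (p : ℝ) : ℝ := pFailJ p / pSuccJ p

/-!
Fourier analysis over `𝔽₂³`. The syndrome condition says that the error `e` on the seven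
`|T⟩` states lies in the coset, indexed by `b`, of the `[7,4]` Hamming code, whose dual (the
simplex code) has all its nonzero words of weight 4. Expanding the indicator of the coset in
characters, the coset has probability `(1 - q⁴)/8 + [b = 0] q⁴` with `q = 1 - 2p`, and its
signed version `∑ (-1)^|e| Pr(e)` equals `(q⁷ - q³)/8 + [b = 0] q³`; the logical failures are
half their difference. Jones's circuit outputs `b = 0` with probability `(1-p)⁴ + p⁴` (no T
error, or all four, whose product is the identity). In the resulting closed forms,
`pFailJ - (4p² + 21p³) pSuccJ = p⁴ R(p)` for a polynomial `R`, while `pSuccJ ≥ 1/8`.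
-/

open Finset Matrix

def parityChar (x : ZMod 2) : ℝ := if x = 0 then 1 else -1

lemma parityChar_zero : parityChar 0 = 1 := if_pos rfl

lemma ZMod.eq_zero_or_eq_one (x : ZMod 2) : x = 0 ∨ x = 1 := by
  revert x; decide

lemma parityChar_add (x y : ZMod 2) :
    parityChar (x + y) = parityChar x * parityChar y := by
  rcases x.eq_zero_or_eq_one with rfl | rfl <;> rcases y.eq_zero_or_eq_one with rfl | rfl <;>
    simp [parityChar, show (1 : ZMod 2) + 1 = 0 from rfl]

lemma sum_parityChar_mul (y : ZMod 2) :
    ∑ x, parityChar (x * y) = if y = 0 then 2 else 0 := by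
  rw [show (univ : Finset (ZMod 2)) = {0, 1} from rfl, sum_pair zero_ne_one]
  rcases y.eq_zero_or_eq_one with rfl | rfl <;> norm_num [parityChar]

lemma parityChar_sum {ι : Type*} (s : Finset ι) (f : ι → ZMod 2) :
    parityChar (∑ i ∈ s, f i) = ∏ i ∈ s, parityChar (f i) := by
  classical
  induction s using Finset.induction_on with
  | empty => rw [sum_empty, prod_empty, parityChar_zero]
  | insert a s ha ih => rw [sum_insert ha, prod_insert ha, parityChar_add, ih]

lemma sum_parityChar_dotProduct {n : Type*} [Fintype n] [DecidableEq n] (w : n → ZMod 2) :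
    ∑ u : n → ZMod 2, parityChar (u ⬝ᵥ w) = if w = 0 then 2 ^ Fintype.card n else 0 := by
  simp_rw [dotProduct, parityChar_sum]
  rw [← Fintype.prod_sum (fun j x => parityChar (x * w j))]
  simp_rw [sum_parityChar_mul, Fintype.prod_ite_zero, prod_const, card_univ, funext_iff]
  rfl

lemma ite_eq_sum_parityChar {n : Type*} [Fintype n] [DecidableEq n] (s b : n → ZMod 2) :
    (if s = b then 1 else 0 : ℝ) =
      (2 ^ Fintype.card n)⁻¹ *
        ∑ u : n → ZMod 2, parityChar (u ⬝ᵥ s) * parityChar (u ⬝ᵥ b) := by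
  simp_rw [← parityChar_add, ← dotProduct_add, sum_parityChar_dotProduct]
  have hsb : s + b = 0 ↔ s = b := by
    rw [add_eq_zero_iff_eq_neg, show -b = b from funext fun i => ZMod.neg_eq_self_mod_two (b i)]
  simp only [hsb]
  split_ifs <;> simp

lemma sum_parityChar_mul_ite {n : Type*} [Fintype n] [DecidableEq n] (b : n → ZMod 2)
    (α β : ℝ) :
    ∑ u : n → ZMod 2, parityChar (u ⬝ᵥ b) * (if u = 0 then α else β) =
      (if b = 0 then 2 ^ Fintype.card n * β else 0) + (α - β) := by
  have hite (u : n → ZMod 2) :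
      (if u = 0 then α else β) = β + if u = 0 then α - β else 0 := by
    split_ifs <;> ring
  simp_rw [hite, mul_add, sum_add_distrib, ← sum_mul, sum_parityChar_dotProduct, mul_ite,
    mul_zero, sum_ite_eq', if_pos (mem_univ _), zero_dotProduct]
  rw [parityChar_zero, one_mul, ite_mul, zero_mul]

lemma sum_prod_bool {ι R : Type*} [Fintype ι] [DecidableEq ι] [CommSemiring R]
    (w : ι → Bool → R) :
    ∑ e : ι → Bool, ∏ i, w i (e i) = ∏ i, (w i false + w i true) := by
  rw [← Fintype.prod_sum]
  simp_rw [Fintype.sum_bool, add_comm]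

lemma sum_ite_syndrome_eq_fourier {ι n : Type*} [Fintype ι] [DecidableEq ι] [Fintype n]
    [DecidableEq n] (H : ι → n → ZMod 2) (w : ι → Bool → ℝ) (b : n → ZMod 2) :
    ∑ e : ι → Bool, (if ∑ i, (if e i then H i else 0) = b then ∏ i, w i (e i) else 0) =
      (2 ^ Fintype.card n)⁻¹ * ∑ u : n → ZMod 2,
        parityChar (u ⬝ᵥ b) * ∏ i, (w i false + parityChar (u ⬝ᵥ H i) * w i true) := by
  have hchar (u : n → ZMod 2) (e : ι → Bool) :
      parityChar (u ⬝ᵥ ∑ i, (if e i then H i else 0)) * ∏ i, w i (e i) =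
        ∏ i, (if e i then parityChar (u ⬝ᵥ H i) * w i true else w i false) := by
    rw [dotProduct_sum, parityChar_sum, ← prod_mul_distrib]
    refine prod_congr rfl fun i _ => ?_
    cases e i <;> simp [parityChar]
  calc _ = ∑ e : ι → Bool, (2 ^ Fintype.card n)⁻¹ * ∑ u : n → ZMod 2,
          parityChar (u ⬝ᵥ b) * (parityChar (u ⬝ᵥ ∑ i, (if e i then H i else 0)) *
            ∏ i, w i (e i)) := by
        refine sum_congr rfl fun e _ => ?_
        rw [← boole_mul, ite_eq_sum_parityChar, mul_assoc, sum_mul]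
        simp only [mul_comm, mul_left_comm]
    _ = _ := by
        rw [← mul_sum, sum_comm]
        simp_rw [← mul_sum, hchar]
        congr! 3 with u
        exact sum_prod_bool fun i x => if x then parityChar (u ⬝ᵥ H i) * w i true else w i false

lemma syndromeTrivial_iff (e : V3 → Bool) (b : Fin 3 → ZMod 2) :
    syndromeTrivial e b ↔ ∑ v, (if e v then v.1 else 0) = b := by
  simp only [syndromeTrivial, funext_iff, Finset.sum_apply]
  refine forall_congr' fun i => Eq.congr_left (sum_congr rfl fun v _ => ?_)
  cases e v
  · simp
  · rcases (v.1 i).eq_zero_or_eq_one with h | h <;> simp [h]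

lemma card_V3_dotProduct_eq_one (u : Fin 3 → ZMod 2) :
    #{v : V3 | u ⬝ᵥ v.1 = 1} = if u = 0 then 0 else 4 := by
  revert u; decide

lemma prod_dotProduct_V3 (f : ZMod 2 → ℝ) (u : Fin 3 → ZMod 2) :
    ∏ v : V3, f (u ⬝ᵥ v.1) = if u = 0 then f 0 ^ 7 else f 0 ^ 3 * f 1 ^ 4 := by
  have hsplit : ∀ v : V3, f (u ⬝ᵥ v.1) = if u ⬝ᵥ v.1 = 1 then f 1 else f 0 := fun v => by
    rcases (u ⬝ᵥ v.1).eq_zero_or_eq_one with h | h <;> simp [h]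
  have hcompl : #{v : V3 | ¬ u ⬝ᵥ v.1 = 1} = 7 - #{v : V3 | u ⬝ᵥ v.1 = 1} := by
    rw [filter_not, card_sdiff_of_subset (filter_subset _ _)]; rfl
  rw [prod_congr rfl fun v _ => hsplit v, prod_ite, prod_const, prod_const, hcompl,
    card_V3_dotProduct_eq_one]
  split_ifs <;> ring

lemma sum_syndromeTrivial_prod (a c : ℝ) (b : Fin 3 → ZMod 2) :
    ∑ e : V3 → Bool, (if syndromeTrivial e b then ∏ v, (if e v then c else a) else 0) =
      ((a + c) ^ 7 - (a + c) ^ 3 * (a - c) ^ 4) / 8 +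
        if b = 0 then (a + c) ^ 3 * (a - c) ^ 4 else 0 := by
  simp_rw [syndromeTrivial_iff]
  rw [sum_ite_syndrome_eq_fourier (fun v : V3 => v.1) (fun _ x => if x then c else a)]
  simp only [Bool.false_eq_true, if_false, if_true]
  rw [sum_congr rfl fun u _ => congrArg _ (prod_dotProduct_V3 (fun y => a + parityChar y * c) u),
    sum_parityChar_mul_ite]
  simp only [parityChar, one_ne_zero, if_false, Fintype.card_fin]
  split_ifs <;> ring

lemma ite_logicalZErr_pT (e : V3 → Bool) (p : ℝ) :
    (if logicalZErr e then pT p e else 0) =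
      (pT p e - ∏ v, (if e v then -p else 1 - p)) / 2 := by
  have hsign : ∏ v, (if e v then -p else 1 - p) =
      parityChar (∑ v, if e v then (1 : ZMod 2) else 0) * pT p e := by
    rw [parityChar_sum, pT, ← prod_mul_distrib]
    refine prod_congr rfl fun v _ => ?_
    cases e v <;> simp [parityChar]
  rw [hsign]
  unfold logicalZErr
  rcases (∑ v, if e v then (1 : ZMod 2) else 0).eq_zero_or_eq_one with h | h <;>
    simp [h, parityChar]

lemma sum_pJones (p : ℝ) : ∑ f, pJones p f = 1 := by
  refine (sum_prod_bool fun _ x => if x then p else 1 - p).trans ?_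
  simp

lemma filter_bOf_eq_zero :
    ({f | bOf f = 0} : Finset (Fin 4 → Bool)) = {fun _ => false, fun _ => true} := by
  decide

lemma sum_pJones_mul (p α β : ℝ) :
    ∑ f, pJones p f * (α + if bOf f = 0 then β else 0) = α + ((1 - p) ^ 4 + p ^ 4) * β := by
  simp_rw [mul_add, sum_add_distrib, ← sum_mul, sum_pJones, mul_ite, mul_zero, ← sum_filter,
    filter_bOf_eq_zero, ← sum_mul]
  rw [sum_pair (by decide)]
  simp [pJones]

lemma sum_sum_ite_pT_mul_pJones (p : ℝ) (P : (V3 → Bool) → (Fin 3 → ZMod 2) → Prop)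
    [∀ e b, Decidable (P e b)] :
    ∑ e, ∑ f, (if P e (bOf f) then pT p e * pJones p f else 0) =
      ∑ f, pJones p f * ∑ e, (if P e (bOf f) then pT p e else 0) := by
  rw [sum_comm]
  simp_rw [mul_sum, mul_ite, mul_zero, mul_comm]

lemma sum_ite_syndromeTrivial_pT (p : ℝ) (b : Fin 3 → ZMod 2) :
    ∑ e, (if syndromeTrivial e b then pT p e else 0) =
      (1 - (1 - 2 * p) ^ 4) / 8 + if b = 0 then (1 - 2 * p) ^ 4 else 0 := by
  have h := sum_syndromeTrivial_prod (1 - p) p b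
  simp only [show 1 - p + p = 1 by ring, show 1 - p - p = 1 - 2 * p by ring, one_pow,
    one_mul] at h
  exact h

lemma sum_ite_syndromeTrivial_signed (p : ℝ) (b : Fin 3 → ZMod 2) :
    ∑ e : V3 → Bool, (if syndromeTrivial e b then ∏ v, (if e v then -p else 1 - p) else 0) =
      ((1 - 2 * p) ^ 7 - (1 - 2 * p) ^ 3) / 8 + if b = 0 then (1 - 2 * p) ^ 3 else 0 := by
  have h := sum_syndromeTrivial_prod (1 - p) (-p) b
  simp only [show 1 - p + -p = 1 - 2 * p by ring, show 1 - p - -p = 1 by ring, one_pow,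
    mul_one] at h
  exact h

lemma pSuccJ_eq (p : ℝ) :
    pSuccJ p = (1 - (1 - 2 * p) ^ 4) / 8 + ((1 - p) ^ 4 + p ^ 4) * (1 - 2 * p) ^ 4 := by
  rw [pSuccJ, sum_sum_ite_pT_mul_pJones p syndromeTrivial]
  simp_rw [sum_ite_syndromeTrivial_pT, sum_pJones_mul]

lemma pFailJ_eq (p : ℝ) :
    pFailJ p = ((1 - (1 - 2 * p) ^ 4) - ((1 - 2 * p) ^ 7 - (1 - 2 * p) ^ 3)) / 16 +
      ((1 - p) ^ 4 + p ^ 4) * (((1 - 2 * p) ^ 4 - (1 - 2 * p) ^ 3) / 2) := by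
  have hcoset (b : Fin 3 → ZMod 2) :
      ∑ e, (if syndromeTrivial e b ∧ logicalZErr e then pT p e else 0) =
        ((1 - (1 - 2 * p) ^ 4) - ((1 - 2 * p) ^ 7 - (1 - 2 * p) ^ 3)) / 16 +
          if b = 0 then ((1 - 2 * p) ^ 4 - (1 - 2 * p) ^ 3) / 2 else 0 := by
    have hsplit (e : V3 → Bool) :
        (if syndromeTrivial e b ∧ logicalZErr e then pT p e else 0) =
          ((if syndromeTrivial e b then pT p e else 0) -
            if syndromeTrivial e b then ∏ v, (if e v then -p else 1 - p) else 0) / 2 := by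
      rw [ite_and, ite_logicalZErr_pT]
      split_ifs <;> simp
    rw [sum_congr rfl fun e _ => hsplit e, ← sum_div, sum_sub_distrib,
      sum_ite_syndromeTrivial_pT, sum_ite_syndromeTrivial_signed]
    split_ifs <;> ring
  rw [pFailJ, sum_sum_ite_pT_mul_pJones p fun e b => syndromeTrivial e b ∧ logicalZErr e]
  simp_rw [hcoset, sum_pJones_mul]

def jonesRemainder (p : ℝ) : ℝ :=
  55 - 623 * p + 2496 * p ^ 2 - 5296 * p ^ 3 + 6656 * p ^ 4 - 5200 * p ^ 5 + 2560 * p ^ 6 -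
    672 * p ^ 7

lemma pFailJ_sub_mul_pSuccJ (p : ℝ) :
    pFailJ p - pSuccJ p * (4 * p ^ 2 + 21 * p ^ 3) = p ^ 4 * jonesRemainder p := by
  rw [pFailJ_eq, pSuccJ_eq, jonesRemainder]
  ring

lemma one_div_eight_le_pSuccJ {p : ℝ} (hp0 : 0 ≤ p) (hp1 : p ≤ 1) : 1 / 8 ≤ pSuccJ p := by
  have hr : 1 / 8 ≤ (1 - p) ^ 4 + p ^ 4 := by
    nlinarith [sq_nonneg (2 * p - 1), sq_nonneg ((2 * p - 1) ^ 2)]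
  have hq0 : 0 ≤ (1 - 2 * p) ^ 4 := by positivity
  have hq1 : (1 - 2 * p) ^ 4 ≤ 1 := by
    rw [show 4 = 2 * 2 from rfl, pow_mul]
    exact pow_le_one₀ (sq_nonneg _) (by nlinarith)
  rw [pSuccJ_eq]
  nlinarith

/-- If the noisy `|CCZ⟩` states are produced from four `|T⟩`
states of independent Z-error probability `p` via Jones's circuit (each of the
four T errors propagating to a distinct Z error on the output), then the
10-to-1 protocol output error satisfies `p_out = 4p² + 21p³ + O(p⁴)`. -/
theorem ten_to_one_output_error_jones :
    ∃ C : ℝ, 0 < C ∧ ∀ p : ℝ, 0 ≤ p → p ≤ 1 / 2 →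
      |pOutJ p - (4 * p ^ 2 + 21 * p ^ 3)| ≤ C * p ^ 4 := by
  obtain ⟨K, hK⟩ := (isCompact_Icc (a := (0 : ℝ)) (b := 1 / 2)).exists_bound_of_continuousOn
    (f := jonesRemainder) (by unfold jonesRemainder; fun_prop)
  refine ⟨8 * max K 1, by positivity, fun p hp0 hp1 => ?_⟩
  have hsucc := one_div_eight_le_pSuccJ hp0 (by linarith)
  have hR : |jonesRemainder p| ≤ max K 1 := (hK p ⟨hp0, hp1⟩).trans (le_max_left _ _)
  have hp4 : 0 ≤ p ^ 4 := by positivity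
  have hsucc_pos : 0 < pSuccJ p := by linarith
  rw [pOutJ, div_sub' hsucc_pos.ne', pFailJ_sub_mul_pSuccJ, abs_div, abs_mul, abs_of_nonneg hp4,
    abs_of_pos hsucc_pos, div_le_iff₀ hsucc_pos]
  calc p ^ 4 * |jonesRemainder p| ≤ p ^ 4 * max K 1 := by gcongr
    _ = 8 * max K 1 * p ^ 4 * (1 / 8) := by ring
    _ ≤ 8 * max K 1 * p ^ 4 * pSuccJ p := by gcongr
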